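/- Let M = [[M_xx, M_xq],[M_qx, M_qq]] ∈ ℝ^{(2+k)×(2+k)} be symmetric positive definite in block form with M_xx ∈ ℝ^{2×2}, M_qq ∈ ℝ^{k×k}, M_qx = M_xqᵀ, let G = diag(0₂, G_qq) with G_qq ∈ ℝ^{k×k} invertible, and B = [I₂; 0_{k×2}]. Then rank[λ² M + G, B] = 2 + k for all λ ∈ ℂ if and only if rank[λ² M_qq + G_qq, M_qx] = k for all λ ∈ ℂ. -/

import Mathlib

/-!
With `B = [I₂; 0]` the input columns already span the cart coordinates, so `[λ²M + G, B]` has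
full row rank iff its last `k` rows `[λ² M_qx, λ² M_qq + G_qq]` do. For `λ ≠ 0` the factor `λ²`
does not change the column span of `M_qx`; for `λ = 0` both conditions hold because `G_qq` is
invertible.
-/

open Matrix

namespace Matrix

variable {R K : Type*} [Field K] {l m n p : Type*}

theorem col_fromCols (A : Matrix m n R) (B : Matrix m p R) :
    (fromCols A B).col = Sum.elim A.col B.col := by
  ext (j | j) i <;> rfl

theorem rank_eq_card_iff_range_mulVecLin_eq_top [Fintype m] [Fintype n] (A : Matrix m n K) :
    A.rank = Fintype.card m ↔ LinearMap.range A.mulVecLin = ⊤ := by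
  rw [Submodule.eq_top_iff_finrank_eq, Module.finrank_fintype_fun_eq_card, rank]

theorem range_mulVecLin_fromCols [Fintype n] [Fintype p] (A : Matrix m n K) (B : Matrix m p K) :
    LinearMap.range (fromCols A B).mulVecLin =
      LinearMap.range A.mulVecLin ⊔ LinearMap.range B.mulVecLin := by
  simp only [range_mulVecLin, col_fromCols, Set.Sum.elim_range, Submodule.span_union]

theorem range_mulVecLin_smul [Fintype n] (A : Matrix m n K) {s : K} (hs : s ≠ 0) :
    LinearMap.range (s • A).mulVecLin = LinearMap.range A.mulVecLin := by
  have : (s • A).mulVecLin = s • A.mulVecLin := by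
    ext
    simp
  rw [this, LinearMap.range_smul _ _ hs]

theorem range_mulVecLin_eq_top_of_isUnit [Fintype m] [DecidableEq m] {A : Matrix m m K}
    (hA : IsUnit A) : LinearMap.range A.mulVecLin = ⊤ :=
  LinearMap.range_eq_top.2 (mulVec_surjective_iff_isUnit.2 hA)

theorem range_mulVecLin_fromRows_sup_eq_top_iff [Fintype l] [Fintype m] [DecidableEq m]
    (P : Matrix m l K) (Q : Matrix n l K) :
    LinearMap.range (fromRows P Q).mulVecLin ⊔
        LinearMap.range (fromRows (1 : Matrix m m K) (0 : Matrix n m K)).mulVecLin = ⊤ ↔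
      LinearMap.range Q.mulVecLin = ⊤ := by
  simp only [Submodule.eq_top_iff', Submodule.mem_sup, LinearMap.mem_range, mulVecLin_apply]
  constructor
  · intro h b
    obtain ⟨_, ⟨x, rfl⟩, _, ⟨y, rfl⟩, hxy⟩ := h (Sum.elim 0 b)
    refine ⟨x, funext fun i => ?_⟩
    simpa [fromRows_mulVec] using congrFun hxy (Sum.inr i)
  · intro h v
    obtain ⟨x, hx⟩ := h (v ∘ Sum.inr)
    refine ⟨_, ⟨x, rfl⟩, _, ⟨v ∘ Sum.inl - P *ᵥ x, rfl⟩, ?_⟩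
    ext (i | i) <;> simp [fromRows_mulVec, hx]

theorem rank_fromCols_fromBlocks_fromRows_one_zero_eq_card_iff [Fintype l] [Fintype m]
    [Fintype n] [Fintype p] [DecidableEq m] (A : Matrix m l K) (B : Matrix m p K)
    (C : Matrix n l K) (D : Matrix n p K) :
    (fromCols (fromBlocks A B C D) (fromRows (1 : Matrix m m K) 0)).rank =
        Fintype.card m + Fintype.card n ↔ (fromCols C D).rank = Fintype.card n := by
  rw [← Fintype.card_sum, rank_eq_card_iff_range_mulVecLin_eq_top,
    rank_eq_card_iff_range_mulVecLin_eq_top, range_mulVecLin_fromCols,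
    ← fromRows_fromCols_eq_fromBlocks, range_mulVecLin_fromRows_sup_eq_top_iff]

theorem rank_fromCols_smul_eq_card_iff [Fintype m] [Fintype n] [DecidableEq n]
    {G : Matrix n n K} (hG : IsUnit G) (s : K) (M : Matrix n n K) (C : Matrix n m K) :
    (fromCols (s • C) (s • M + G)).rank = Fintype.card n ↔
      (fromCols (s • M + G) C).rank = Fintype.card n := by
  simp only [rank_eq_card_iff_range_mulVecLin_eq_top, range_mulVecLin_fromCols]
  rcases eq_or_ne s 0 with rfl | hs
  · simp [range_mulVecLin_eq_top_of_isUnit hG]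
  · rw [range_mulVecLin_smul C hs, sup_comm]

end Matrix

theorem controllability_reduction_general (k : ℕ)
    (Mxx : Matrix (Fin 2) (Fin 2) ℝ) (Mxq : Matrix (Fin 2) (Fin k) ℝ)
    (Mqq Gqq : Matrix (Fin k) (Fin k) ℝ)
    (hGqq : IsUnit Gqq.det) :
    (∀ lam : ℂ,
      Matrix.rank (Matrix.fromCols
        (lam ^ 2 • (Matrix.fromBlocks Mxx Mxq Mxqᵀ Mqq).map Complex.ofReal +
          (Matrix.fromBlocks (0 : Matrix (Fin 2) (Fin 2) ℝ) 0 0 Gqq).map Complex.ofReal)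
        ((Matrix.fromRows (1 : Matrix (Fin 2) (Fin 2) ℝ)
          (0 : Matrix (Fin k) (Fin 2) ℝ)).map Complex.ofReal)) = 2 + k)
    ↔ (∀ lam : ℂ,
      Matrix.rank (Matrix.fromCols
        (lam ^ 2 • Mqq.map Complex.ofReal + Gqq.map Complex.ofReal)
        ((Mxqᵀ).map Complex.ofReal)) = k) := by
  have hG : IsUnit (Gqq.map Complex.ofReal) :=
    ((isUnit_iff_isUnit_det Gqq).2 hGqq).map Complex.ofRealHom.mapMatrix
  have hcard : 2 + k = Fintype.card (Fin 2) + Fintype.card (Fin k) := by simp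
  refine forall_congr' fun lam => ?_
  simp only [fromBlocks_map, fromBlocks_smul, fromBlocks_add, fromRows_map,
    Matrix.map_one _ Complex.ofReal_zero Complex.ofReal_one, Matrix.map_zero _ Complex.ofReal_zero,
    add_zero]
  rw [hcard, rank_fromCols_fromBlocks_fromRows_one_zero_eq_card_iff, Fintype.card_fin]
  simpa only [Fintype.card_fin] using rank_fromCols_smul_eq_card_iff hG (lam ^ 2) _ _

theorem controllability_reduction (k : ℕ)
    (Mxx : Matrix (Fin 2) (Fin 2) ℝ) (Mxq : Matrix (Fin 2) (Fin k) ℝ)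
    (Mqq Gqq : Matrix (Fin k) (Fin k) ℝ)
    (hMpos : (Matrix.fromBlocks Mxx Mxq Mxqᵀ Mqq).PosDef)
    (hGqq : IsUnit Gqq.det) :
    (∀ lam : ℂ,
      Matrix.rank (Matrix.fromCols
        (lam ^ 2 • (Matrix.fromBlocks Mxx Mxq Mxqᵀ Mqq).map Complex.ofReal +
          (Matrix.fromBlocks (0 : Matrix (Fin 2) (Fin 2) ℝ) 0 0 Gqq).map Complex.ofReal)
        ((Matrix.fromRows (1 : Matrix (Fin 2) (Fin 2) ℝ)
          (0 : Matrix (Fin k) (Fin 2) ℝ)).map Complex.ofReal)) = 2 + k)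
    ↔ (∀ lam : ℂ,
      Matrix.rank (Matrix.fromCols
        (lam ^ 2 • Mqq.map Complex.ofReal + Gqq.map Complex.ofReal)
        ((Mxqᵀ).map Complex.ofReal)) = k) :=
  controllability_reduction_general k Mxx Mxq Mqq Gqq hGqq
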